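/- arXiv:2204.13377 — 2 statements merged into one kernel-verified Lean document; each statement's English description precedes it below -/
import Mathlib

section
/- Let Γ be a finite simple edge-labeled graph and let e = {s,t} be an edge of Γ whose label m satisfies m > 2. Then there exist no integers p and q such that t·s^p = s·t^q holds in the Artin group A_Γ (where s and t denote the images of the corresponding generators in A_Γ). -/
/-- The alternating product `x y x y ⋯` of length `m`. -/
def altElt {M : Type*} [Monoid M] (x y : M) (m : ℕ) : M :=
  ((List.range m).map (fun i => if i % 2 = 0 then x else y)).prod

/-- The Artin relations of an edge-labeled graph: for each edge `{s,t}` with label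
`μ s t = m`, the relation `Π(s,t;m) = Π(t,s;m)`. -/
def artinRels {V : Type*} (G : SimpleGraph V) (μ : V → V → ℕ) : Set (FreeGroup V) :=
  {r | ∃ s t : V, G.Adj s t ∧
    r = altElt (FreeGroup.of s) (FreeGroup.of t) (μ s t) *
        (altElt (FreeGroup.of t) (FreeGroup.of s) (μ s t))⁻¹}

/-- The Artin group of an edge-labeled graph. -/
abbrev ArtinGroup {V : Type*} (G : SimpleGraph V) (μ : V → V → ℕ) :=
  PresentedGroup (artinRels G μ)

/-- A simple graph is a cone if it has at least two vertices and some vertex is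
adjacent to every other vertex. -/
def SimpleGraph.IsCone {V : Type*} (G : SimpleGraph V) : Prop :=
  (∃ v w : V, v ≠ w) ∧ ∃ v₀ : V, ∀ w, w ≠ v₀ → G.Adj v₀ w

/-! The Tits representation sends a generator `v` to the reflection
`σ_v x = x - 2 B(e_v, x) e_v` of `ℝ^V`, where `B(e_u, e_v) = -cos (π / μ u v)`. For an edge `{u, v}`,
`σ_u σ_v = 1 + W A` with `W` the inclusion of the plane spanned by `e_u, e_v`; the plane map
`1 + A W` is conjugate to the rotation by `2π / μ u v`, and `(1 + W A)^k = 1 + W (∑ j < k, (1 + A W)^j) A`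
transports `(1 + A W)^k = 1` to `ℝ^V`. So the braid relations hold, and `s, t` go to involutions
`a, b`. Then `t s^p = s t^q` becomes one of `b = a`, `b = a b`, `b a = a`, `b a = a b`, each of which
makes `a` and `b` commute; but the `(s, t)` entries of `a b` and `b a` differ by `4 cos (π / m) ≠ 0`.
-/

open Real

theorem altElt_succ {M : Type*} [Monoid M] (x y : M) (k : ℕ) :
    altElt x y (k + 1) = x * altElt y x k := by
  simp only [altElt, List.range_succ_eq_map, List.map_cons, List.map_map, List.prod_cons]
  congr 3
  funext i
  rcases Nat.mod_two_eq_zero_or_one i with h | h <;> simp [Nat.succ_mod_two_eq_zero_iff, h]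

theorem map_altElt {M N F : Type*} [Monoid M] [Monoid N] [FunLike F M N] [MonoidHomClass F M N]
    (φ : F) (x y : M) (k : ℕ) : φ (altElt x y k) = altElt (φ x) (φ y) k := by
  induction k generalizing x y with
  | zero => simp [altElt]
  | succ k ih => rw [altElt_succ, altElt_succ, map_mul, ih]

theorem altElt_mul_inv_altElt_swap {G : Type*} [Group G] {a b : G} (ha : a * a = 1)
    (hb : b * b = 1) (k : ℕ) : altElt a b k * (altElt b a k)⁻¹ = (a * b) ^ k := by
  induction k generalizing a b with
  | zero => simp [altElt]
  | succ k ih =>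
    have hconj : a * (b * a) ^ k = (a * b) ^ k * a :=
      (SemiconjBy.pow_right (mul_assoc a b a).symm k).eq
    rw [altElt_succ, altElt_succ, mul_inv_rev, inv_eq_of_mul_eq_one_right hb, ← mul_assoc,
      mul_assoc a, ih hb ha, hconj, mul_assoc, pow_succ]

theorem altElt_eq_altElt_swap {G : Type*} [Group G] {a b : G} (ha : a * a = 1) (hb : b * b = 1)
    {k : ℕ} (hk : (a * b) ^ k = 1) : altElt a b k = altElt b a k :=
  mul_inv_eq_one.mp ((altElt_mul_inv_altElt_swap ha hb k).trans hk)

theorem zpow_eq_one_or_self_of_mul_self_eq_one {G : Type*} [Group G] {a : G} (ha : a * a = 1)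
    (n : ℤ) : a ^ n = 1 ∨ a ^ n = a := by
  obtain ⟨j, rfl | rfl⟩ := Int.even_or_odd' n
  · left; rw [zpow_mul, zpow_two, ha, one_zpow]
  · right; rw [zpow_add_one, zpow_mul, zpow_two, ha, one_zpow, one_mul]

theorem mul_zpow_ne_mul_zpow {G : Type*} [Group G] {a b : G} (ha : a * a = 1) (hb : b * b = 1)
    (hab : a * b ≠ b * a) (p q : ℤ) : b * a ^ p ≠ a * b ^ q := by
  have ha1 : a ≠ 1 := by rintro rfl; simp at hab
  have hb1 : b ≠ 1 := by rintro rfl; simp at hab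
  have hba : a ≠ b := by rintro rfl; exact hab rfl
  rcases zpow_eq_one_or_self_of_mul_self_eq_one ha p with hp | hp <;>
    rcases zpow_eq_one_or_self_of_mul_self_eq_one hb q with hq | hq <;>
    rw [hp, hq] <;> simp [*, eq_comm]

namespace ArtinGroup

variable {V : Type*} {G : SimpleGraph V} {μ : V → V → ℕ} {H : Type*} [Group H]

def lift (f : V → H)
    (hf : ∀ s t, G.Adj s t → altElt (f s) (f t) (μ s t) = altElt (f t) (f s) (μ s t)) :
    ArtinGroup G μ →* H :=
  PresentedGroup.toGroup (f := f) (by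
    rintro r ⟨s, t, hst, rfl⟩
    rw [map_mul, map_inv, map_altElt, map_altElt, FreeGroup.lift_apply_of,
      FreeGroup.lift_apply_of, hf s t hst, mul_inv_cancel])

theorem lift_of (f : V → H)
    (hf : ∀ s t, G.Adj s t → altElt (f s) (f t) (μ s t) = altElt (f t) (f s) (μ s t)) (v : V) :
    lift f hf (PresentedGroup.of v) = f v :=
  PresentedGroup.toGroup.of (x := v) _

end ArtinGroup

namespace Matrix

variable {n ι R : Type*} [Fintype n] [Fintype ι] [DecidableEq n] [DecidableEq ι] [CommRing R]

theorem one_add_mul_pow (W : Matrix n ι R) (A : Matrix ι n R) (k : ℕ) :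
    (1 + W * A) ^ k = 1 + W * (∑ j ∈ Finset.range k, (1 + A * W) ^ j) * A := by
  induction k with
  | zero => simp
  | succ k ih =>
    rw [pow_succ', ih, geom_sum_succ]
    generalize ∑ j ∈ Finset.range k, (1 + A * W) ^ j = S
    simp only [Matrix.mul_add, Matrix.add_mul, Matrix.mul_one, Matrix.one_mul, Matrix.mul_assoc]
    abel

theorem one_add_mul_pow_eq_one {W : Matrix n ι R} {A : Matrix ι n R} {k : ℕ}
    (hk : (1 + A * W) ^ k = 1) (hAW : IsUnit (A * W)) : (1 + W * A) ^ k = 1 := by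
  have hsum : ∑ j ∈ Finset.range k, (1 + A * W) ^ j = 0 := by
    have h := mul_geom_sum (1 + A * W) k
    rwa [add_sub_cancel_left, hk, sub_self, hAW.mul_right_eq_zero] at h
  rw [one_add_mul_pow, hsum, Matrix.mul_zero, Matrix.zero_mul, add_zero]

end Matrix

theorem sin_pi_div_pos {k : ℕ} (hk : 2 ≤ k) : 0 < sin (π / k) := by
  have hk' : (2 : ℝ) ≤ k := by exact_mod_cast hk
  refine sin_pos_of_pos_of_lt_pi (by positivity) ?_
  rw [div_lt_iff₀ (by positivity)]
  nlinarith [pi_pos]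

theorem cos_pi_div_pos {m : ℕ} (hm : 2 < m) : 0 < cos (π / m) := by
  have hm' : (2 : ℝ) < m := by exact_mod_cast hm
  refine cos_pos_of_mem_Ioo ⟨by linarith [pi_pos, div_pos pi_pos (by linarith : (0 : ℝ) < m)], ?_⟩
  exact div_lt_div_of_pos_left pi_pos two_pos hm'

theorem dihedral_pow_eq_one {θ : ℝ} {k : ℕ} (hkθ : k * θ = π) (hθ : sin θ ≠ 0) :
    (!![-1, 2 * cos θ; 0, 1] * !![1, 0; 2 * cos θ, -1] : Matrix (Fin 2) (Fin 2) ℝ) ^ k = 1 := by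
  set P : Matrix (Fin 2) (Fin 2) ℝ := !![-1, 2 * cos θ; 0, 1] * !![1, 0; 2 * cos θ, -1]
  -- the columns of `C` are the unit normals `1` and `-exp (-θ i)` of two lines at angle `θ`
  set C : Matrix (Fin 2) (Fin 2) ℝ := !![1, -cos θ; 0, sin θ]
  set z : ℂ := Complex.exp (↑(2 * θ) * Complex.I)
  have hconj : SemiconjBy C P (Algebra.leftMulMatrix Complex.basisOneI z) := by
    rw [SemiconjBy, Algebra.leftMulMatrix_complex, Complex.exp_ofReal_mul_I_re,
      Complex.exp_ofReal_mul_I_im, cos_two_mul, sin_two_mul]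
    simp only [P, C, Matrix.mul_fin_two]
    rw [EmbeddingLike.apply_eq_iff_eq]
    simp only [Matrix.vecCons_inj, and_true]
    refine ⟨⟨by ring, ?_⟩, by ring, by ring⟩
    linear_combination (2 * cos θ) * sin_sq_add_cos_sq θ
  have hzk : z ^ k = 1 := by
    have hkθ' : (k : ℂ) * θ = π := by exact_mod_cast hkθ
    rw [← Complex.exp_nat_mul, ← Complex.exp_two_pi_mul_I]
    congr 1
    push_cast
    linear_combination (2 * Complex.I) * hkθ'
  have hC : IsUnit C := by
    rw [Matrix.isUnit_iff_isUnit_det, Matrix.det_fin_two_of]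
    simpa using hθ
  apply hC.mul_left_cancel
  rw [(hconj.pow_right k).eq, ← map_pow, hzk, map_one, one_mul, mul_one]

theorem dihedral_sub_one_isUnit {θ : ℝ} (hθ : sin θ ≠ 0) :
    IsUnit (!![-1, 2 * cos θ; 0, 1] * !![1, 0; 2 * cos θ, -1] - 1 : Matrix (Fin 2) (Fin 2) ℝ) := by
  rw [Matrix.mul_fin_two, Matrix.one_fin_two, Matrix.of_sub_of]
  simp only [Matrix.cons_sub_cons, Matrix.empty_sub_empty]
  rw [Matrix.isUnit_iff_isUnit_det, Matrix.det_fin_two_of, isUnit_iff_ne_zero]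
  have hsin : (4 : ℝ) * sin θ ^ 2 ≠ 0 := by positivity
  convert hsin using 1
  linear_combination -4 * sin_sq_add_cos_sq θ

section TitsReflection

open Matrix

variable {V R : Type*} [DecidableEq V] [CommRing R]

def titsReflection (B : Matrix V V R) (v : V) : Matrix V V R :=
  1 - (2 : R) • vecMulVec (Pi.single v 1) (B v)

theorem titsReflection_eq_one_add_mul (B : Matrix V V R) (u v : V) :
    titsReflection B u = 1 + (1 : Matrix V V R).submatrix id ![u, v] * Matrix.of ![-2 • B u, 0] ∧
    titsReflection B v = 1 + (1 : Matrix V V R).submatrix id ![u, v] * Matrix.of ![0, -2 • B v] := by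
  constructor <;> ext i j <;>
    simp [titsReflection, Matrix.mul_apply, Fin.sum_univ_two, Matrix.one_apply, Pi.single_apply,
      vecMulVec_apply, sub_eq_add_neg, eq_comm, neg_ite]

variable [Fintype V]

theorem titsReflection_mul_self {B : Matrix V V R} {v : V} (hv : B v v = 1) :
    titsReflection B v * titsReflection B v = 1 := by
  simp only [titsReflection, sub_mul, mul_sub, Matrix.mul_one, smul_mul_smul,
    vecMulVec_mul_vecMulVec, dotProduct_single, hv, one_mul, one_smul]
  module

theorem titsReflection_mul_ne_mul_swap [NoZeroDivisors R] [CharZero R] {B : Matrix V V R}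
    {s t : V} (hst : s ≠ t) (ht : B t t = 1) (hB : B s t ≠ 0) :
    titsReflection B s * titsReflection B t ≠ titsReflection B t * titsReflection B s := by
  intro h
  refine hB ?_
  simpa [titsReflection, sub_mul, mul_sub, vecMulVec_mul_vecMulVec, vecMulVec_apply, hst, ht]
    using congrFun (congrFun h s) t

theorem titsReflection_mul_pow_eq_one {B : Matrix V V ℝ} {u v : V} {k : ℕ} (hk : 2 ≤ k)
    (hu : B u u = 1) (hv : B v v = 1) (huv : B u v = -cos (π / k)) (hvu : B v u = -cos (π / k)) :
    (titsReflection B u * titsReflection B v) ^ k = 1 := by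
  set W := (1 : Matrix V V ℝ).submatrix id ![u, v]
  set Au : Matrix (Fin 2) V ℝ := Matrix.of ![-2 • B u, 0]
  set Av : Matrix (Fin 2) V ℝ := Matrix.of ![0, -2 • B v]
  obtain ⟨hRu, hRv⟩ := titsReflection_eq_one_add_mul B u v
  have hW (A : Matrix (Fin 2) V ℝ) : A * W = A.submatrix id ![u, v] :=
    Matrix.mul_submatrix_one (Equiv.refl V) _ A
  have hAuW : 1 + Au * W = !![-1, 2 * cos (π / k); 0, 1] := by
    rw [hW]; ext a b; fin_cases a <;> fin_cases b <;> norm_num [Au, hu, huv]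
  have hAvW : 1 + Av * W = !![1, 0; 2 * cos (π / k), -1] := by
    rw [hW]; ext a b; fin_cases a <;> fin_cases b <;> norm_num [Av, hv, hvu]
  have hbig : (1 + W * Au) * (1 + W * Av) = 1 + W * (Au + Av + Au * W * Av) := by
    simp only [Matrix.mul_add, Matrix.add_mul, Matrix.mul_one, Matrix.one_mul, Matrix.mul_assoc]
    abel
  have hsmall : 1 + (Au + Av + Au * W * Av) * W = (1 + Au * W) * (1 + Av * W) := by
    simp only [Matrix.mul_add, Matrix.add_mul, Matrix.mul_one, Matrix.one_mul, Matrix.mul_assoc]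
    abel
  have hθ : sin (π / k) ≠ 0 := (sin_pi_div_pos hk).ne'
  rw [hRu, hRv, hbig]
  apply Matrix.one_add_mul_pow_eq_one
  · rw [hsmall, hAuW, hAvW]
    exact dihedral_pow_eq_one (mul_div_cancel₀ _ (by positivity)) hθ
  · rw [← add_sub_cancel_left 1 ((Au + Av + Au * W * Av) * W), hsmall, hAuW, hAvW]
    exact dihedral_sub_one_isUnit hθ

end TitsReflection

noncomputable section CoxeterReflection

variable {V : Type*} [DecidableEq V]

def coxeterCosine (μ : V → V → ℕ) : Matrix V V ℝ :=
  Matrix.of fun u v => if u = v then 1 else -cos (π / μ u v)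

theorem coxeterCosine_self (μ : V → V → ℕ) (v : V) : coxeterCosine μ v v = 1 := by
  simp [coxeterCosine]

variable [Fintype V]

theorem titsReflection_coxeterCosine_mul_self (μ : V → V → ℕ) (v : V) :
    titsReflection (coxeterCosine μ) v * titsReflection (coxeterCosine μ) v = 1 :=
  titsReflection_mul_self (coxeterCosine_self μ v)

def coxeterReflection (μ : V → V → ℕ) (v : V) : (Matrix V V ℝ)ˣ :=
  ⟨_, _, titsReflection_coxeterCosine_mul_self μ v, titsReflection_coxeterCosine_mul_self μ v⟩

theorem coxeterReflection_mul_self (μ : V → V → ℕ) (v : V) :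
    coxeterReflection μ v * coxeterReflection μ v = 1 :=
  Units.ext (titsReflection_coxeterCosine_mul_self μ v)

theorem coxeterReflection_mul_pow {μ : V → V → ℕ} (hμsymm : ∀ s t, μ s t = μ t s) {s t : V}
    (hst : s ≠ t) (hμ : 2 ≤ μ s t) :
    (coxeterReflection μ s * coxeterReflection μ t) ^ μ s t = 1 := by
  refine Units.ext (titsReflection_mul_pow_eq_one hμ (coxeterCosine_self μ s)
    (coxeterCosine_self μ t) ?_ ?_)
  · simp [coxeterCosine, hst]
  · simp [coxeterCosine, hst.symm, hμsymm t s]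

theorem coxeterReflection_mul_ne_mul_swap {μ : V → V → ℕ} {s t : V} (hst : s ≠ t)
    (hμ : 2 < μ s t) :
    coxeterReflection μ s * coxeterReflection μ t ≠ coxeterReflection μ t * coxeterReflection μ s :=
  fun h ↦ titsReflection_mul_ne_mul_swap hst (coxeterCosine_self μ t)
    (by simpa [coxeterCosine, hst] using (cos_pi_div_pos hμ).ne') (congrArg Units.val h)

def ArtinGroup.titsRep {G : SimpleGraph V} {μ : V → V → ℕ} (hμsymm : ∀ s t, μ s t = μ t s)
    (hμ2 : ∀ s t, G.Adj s t → 2 ≤ μ s t) : ArtinGroup G μ →* (Matrix V V ℝ)ˣ :=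
  ArtinGroup.lift (coxeterReflection μ) fun s t hst ↦
    altElt_eq_altElt_swap (coxeterReflection_mul_self μ s) (coxeterReflection_mul_self μ t)
      (coxeterReflection_mul_pow hμsymm hst.ne (hμ2 s t hst))

end CoxeterReflection

theorem artin_no_square
    {V : Type*} [Fintype V] (G : SimpleGraph V) (μ : V → V → ℕ)
    (hμsymm : ∀ s t : V, μ s t = μ t s)
    (hμ2 : ∀ s t : V, G.Adj s t → 2 ≤ μ s t)
    (s t : V) (hadj : G.Adj s t) (hm : 2 < μ s t) :
    ¬ ∃ p q : ℤ,
      (PresentedGroup.of t : ArtinGroup G μ) * (PresentedGroup.of s : ArtinGroup G μ) ^ p =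
        (PresentedGroup.of s : ArtinGroup G μ) * (PresentedGroup.of t : ArtinGroup G μ) ^ q := by
  classical
  rintro ⟨p, q, h⟩
  refine mul_zpow_ne_mul_zpow (coxeterReflection_mul_self μ s) (coxeterReflection_mul_self μ t)
    (coxeterReflection_mul_ne_mul_swap hadj.ne hm) p q ?_
  simpa [ArtinGroup.titsRep, ArtinGroup.lift_of] using congrArg (ArtinGroup.titsRep hμsymm hμ2) h
end

section
/- Let k ≥ 1 and let G₁, …, G_k be connected finite simple graphs, each having at least two vertices. Let T be a tree with vertex set {1, …, k}, and for each edge {i, j} of T with i < j, let s_{i,j} be a chosen vertex of G_i and t_{i,j} a chosen vertex of G_j. Then there exists a positive integer n and, for each i ∈ {1, …, k}, a closed walk (v_{i,1}, …, v_{i,n}, v_{i,n+1}) in G_i with v_{i,1} = v_{i,n+1} that passes through every vertex of G_i at least once, such that for every edge {i, j} of T with i < j there exists an index l ∈ {1, …, n} with v_{i,l} = s_{i,j} and v_{j,l} = t_{i,j}. -/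
/-!
Fix a base vertex `r` of each `G i` that has a neighbour. Up to parity, any length is possible for
a walk covering `G i`: from `u` to `w` there is a covering walk of every large enough length `m`
with `m ≡ d(r, w) - d(r, u) (mod 2)` (go to `r`, traverse a spanning walk there and back, oscillate
along an edge at `r`, go to `w`). So walks can be glued from waypoints `(τ, x)` whose times satisfy
`τ ≡ d(r, x) + ψ (mod 2)` for some phase `ψ`. Each edge `{i, j}` of `T` gets its own time block,
inside which both walks meet; the meeting time forces `ψ i + d(r i, s i j) = ψ j + d(r j, t i j)`,
and since `T` is a tree such phases exist.
-/

namespace SimpleGraph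

variable {V : Type*} {G : SimpleGraph V}

theorem IsTree.exists_potential {A : Type*} [AddCommGroup A] (hG : G.IsTree) (f : V → V → A) :
    ∃ ψ : V → A, ∀ ⦃i j⦄, G.Adj i j → ψ i + f i j = ψ j + f j i := by
  obtain ⟨root⟩ := hG.connected.nonempty
  choose P hP _ using hG.existsUnique_path root
  let ψ v := ((P v).darts.map fun d => f d.fst d.snd - f d.snd d.fst).sum
  have hconcat : ∀ ⦃i j⦄ (h : G.Adj i j), P j = (P i).concat h → ψ i + f i j = ψ j + f j i := by
    intro i j h hPj
    simp only [ψ, hPj, Walk.darts_concat, List.concat_eq_append, List.map_append, List.sum_append,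
      List.map_cons, List.map_nil, List.sum_cons, List.sum_nil]
    abel
  refine ⟨ψ, fun i j h => ?_⟩
  by_cases hj : j ∈ (P i).support
  · exact (hconcat h.symm (hG.isAcyclic.path_concat (hP j) (hP i) h.symm hj)).symm
  · exact hconcat h <| hG.isAcyclic.path_concat (hP i) (hP j) h <|
      hG.isAcyclic.mem_support_of_ne_mem_support_of_adj_of_isPath (hP j) (hP i) h.symm hj

theorem Connected.exists_walk_forall_mem_support [Finite V] (hG : G.Connected) (u : V) :
    ∃ (w : V) (p : G.Walk u w), ∀ x, x ∈ p.support := by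
  have : Fintype V := Fintype.ofFinite V
  suffices ∀ s : List V, ∃ (w : V) (p : G.Walk u w), ∀ x ∈ s, x ∈ p.support by
    obtain ⟨w, p, hp⟩ := this Finset.univ.toList
    exact ⟨w, p, fun x => hp x (by simp)⟩
  intro s
  induction s with
  | nil => exact ⟨u, .nil, by simp⟩
  | cons y s ih =>
    obtain ⟨w, p, hp⟩ := ih
    refine ⟨y, p.append (hG w y).some, ?_⟩
    simp only [List.forall_mem_cons, Walk.mem_support_append_iff]
    exact ⟨Or.inr (Walk.end_mem_support _), fun x hx => Or.inl (hp x hx)⟩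

theorem Adj.exists_walk_length_eq_two_mul {r b : V} (h : G.Adj r b) (a : ℕ) :
    ∃ q : G.Walk r r, q.length = 2 * a := by
  induction a with
  | zero => exact ⟨.nil, rfl⟩
  | succ a ih =>
    obtain ⟨q, hq⟩ := ih
    exact ⟨.cons h (.cons h.symm q), by simp only [Walk.length_cons, hq]; ring⟩

theorem Walk.exists_lt_length_getVert_eq {u x : V} (q : G.Walk u u) (hq : 0 < q.length)
    (hx : x ∈ q.support) : ∃ l < q.length, q.getVert l = x := by
  obtain ⟨l, hl, hle⟩ := Walk.mem_support_iff_exists_getVert.mp hx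
  rcases hle.lt_or_eq with hlt | rfl
  · exact ⟨l, hlt, hl⟩
  · exact ⟨0, hq, by rw [q.getVert_zero, ← hl, q.getVert_length]⟩

theorem exists_walk_getVert_eq_of_segments {τ : ℕ → ℕ} (hτ : StrictMono τ) (hτ0 : τ 0 = 0)
    {p : ℕ → V} {N : ℕ} (hN : 0 < N)
    (hseg : ∀ b < N, ∃ q : G.Walk (p b) (p (b + 1)),
      q.length = τ (b + 1) - τ b ∧ ∀ x, x ∈ q.support) :
    ∃ q : G.Walk (p 0) (p N),
      q.length = τ N ∧ (∀ x, x ∈ q.support) ∧ ∀ b ≤ N, q.getVert (τ b) = p b := by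
  induction N, hN using Nat.le_induction with
  | base =>
    obtain ⟨q, hq, hcov⟩ := hseg 0 one_pos
    rw [hτ0, Nat.sub_zero] at hq
    refine ⟨q, hq, hcov, fun b hb => ?_⟩
    interval_cases b
    · rw [hτ0, q.getVert_zero]
    · rw [← hq, q.getVert_length]
  | succ N hN ih =>
    obtain ⟨q, hq, hcov, hget⟩ := ih fun b hb => hseg b (by omega)
    obtain ⟨q', hq', -⟩ := hseg N (by omega)
    have hlt : τ N < τ (N + 1) := hτ N.lt_succ_self
    refine ⟨q.append q', by simp only [Walk.length_append, hq, hq']; omega,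
      fun x => (Walk.mem_support_append_iff _ _).mpr (.inl (hcov x)), fun b hb => ?_⟩
    rw [Walk.getVert_append', hq]
    rcases Nat.le_succ_iff.mp hb with hb | rfl
    · rw [if_pos (hτ.monotone hb), hget b hb]
    · rw [if_neg hlt.not_ge, ← hq', q'.getVert_length]

def HasCoveringWalks (G : SimpleGraph V) (π : V → ZMod 2) (D : ℕ) : Prop :=
  ∀ u w m, D ≤ m → (m : ZMod 2) = π w - π u →
    ∃ q : G.Walk u w, q.length = m ∧ ∀ x, x ∈ q.support

namespace HasCoveringWalks

variable {π : V → ZMod 2} {D : ℕ}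

theorem const_add (h : G.HasCoveringWalks π D) (c : ZMod 2) :
    G.HasCoveringWalks (fun x => c + π x) D := by
  intro u w m hm hpar
  exact h u w m hm (by rwa [add_sub_add_left_eq_sub] at hpar)

theorem exists_walk_getVert_eq (h : G.HasCoveringWalks π D) {B : ℕ} (hB : D < B)
    (hBeven : Even B) {N : ℕ} (hN : 0 < N) (p : ℕ → V) (hp0 : π (p 0) = 0) (hpN : π (p N) = 0) :
    ∃ q : G.Walk (p 0) (p N), q.length = B * N ∧ (∀ x, x ∈ q.support) ∧
      ∀ b ≤ N, q.getVert (B * b + (π (p b)).val) = p b := by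
  set τ : ℕ → ℕ := fun b => B * b + (π (p b)).val
  have hB2 : 2 ≤ B := by obtain ⟨c, rfl⟩ := hBeven; omega
  have hstep : ∀ b, τ b + (B - 1) ≤ τ (b + 1) := fun b => by
    have := ZMod.val_lt (π (p b))
    simp only [τ, mul_add, mul_one]
    omega
  have hτ : StrictMono τ := strictMono_nat_of_lt_succ fun b => by have := hstep b; omega
  have hcast : ∀ b, (τ b : ZMod 2) = π (p b) := fun b => by
    simp [τ, ZMod.natCast_eq_zero_iff_even.mpr hBeven]
  obtain ⟨q, hq, hcov, hget⟩ := exists_walk_getVert_eq_of_segments hτ (by simp [τ, hp0]) hN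
    fun b _ => h _ _ _ (by have := hstep b; omega)
      (by rw [Nat.cast_sub (hτ.monotone b.le_succ), hcast, hcast])
  exact ⟨q, by simp [hq, τ, hpN], hcov, hget⟩

theorem exists_closed_walk_visiting_at {ι : Type*} (h : G.HasCoveringWalks π D) {B N : ℕ}
    (hB : D < B) (hBeven : Even B) (hN : 0 < N) (blk : ι → ℕ) (hblk : Function.Injective blk)
    (hblkN : ∀ j, 0 < blk j ∧ blk j < N) (tgt : ι → V) {u : V} (hu : π u = 0) :
    ∃ v : ℕ → V, v (B * N) = v 0 ∧ (∀ l < B * N, G.Adj (v l) (v (l + 1))) ∧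
      (∀ x, ∃ l < B * N, v l = x) ∧
      ∀ j, B * blk j + (π (tgt j)).val < B * N ∧ v (B * blk j + (π (tgt j)).val) = tgt j := by
  set p := Function.extend blk tgt fun _ => u
  have hpu : ∀ b, (∀ j, blk j ≠ b) → p b = u := fun b hb =>
    Function.extend_apply' _ _ _ fun ⟨j, hj⟩ => hb j hj
  have hp0 : p 0 = u := hpu 0 fun j => (hblkN j).1.ne'
  have hpN : p N = u := hpu N fun j => (hblkN j).2.ne
  obtain ⟨q, hq, hcov, hget⟩ :=
    h.exists_walk_getVert_eq hB hBeven hN p (hp0 ▸ hu) (hpN ▸ hu)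
  set q' := q.copy hp0 hpN
  have hq' : q'.length = B * N := by simp [q', hq]
  have hB2 : 2 ≤ B := by obtain ⟨c, rfl⟩ := hBeven; omega
  refine ⟨q'.getVert, by rw [← hq', q'.getVert_length, q'.getVert_zero],
    fun l hl => q'.adj_getVert_succ (hq' ▸ hl),
    fun x => hq' ▸ q'.exists_lt_length_getVert_eq (by rw [hq']; positivity) (by simp [q', hcov]),
    fun j => ⟨?_, by simpa [q', p, hblk.extend_apply] using hget (blk j) (hblkN j).2.le⟩⟩
  have hval := ZMod.val_lt (π (tgt j))
  calc _ < B * blk j + B := by omega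
    _ = B * (blk j + 1) := by ring
    _ ≤ B * N := Nat.mul_le_mul_left _ (hblkN j).2

end HasCoveringWalks

theorem Connected.exists_hasCoveringWalks [Finite V] [Nontrivial V] (hG : G.Connected) :
    ∃ (π : V → ZMod 2) (D : ℕ), Function.Surjective π ∧ G.HasCoveringWalks π D := by
  have : Fintype V := Fintype.ofFinite V
  obtain ⟨r⟩ : Nonempty V := inferInstance
  obtain ⟨b, hrb⟩ := hG.preconnected.exists_adj_of_nontrivial r
  obtain ⟨_, tour, htour⟩ := hG.exists_walk_forall_mem_support r
  set R := Finset.univ.sup (G.dist r)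
  refine ⟨fun x => G.dist r x, R + 2 * tour.length + R, fun c => ?_, fun u w m hm hpar => ?_⟩
  · fin_cases c
    · exact ⟨r, by simp; rfl⟩
    · exact ⟨b, by simp [dist_eq_one_iff_adj.mpr hrb]; rfl⟩
  obtain ⟨p₁, hp₁⟩ := hG.exists_walk_length_eq_dist u r
  obtain ⟨p₂, hp₂⟩ := hG.exists_walk_length_eq_dist r w
  have hu : G.dist u r ≤ R := dist_comm (G := G) ▸ Finset.le_sup (Finset.mem_univ u)
  have hw : G.dist r w ≤ R := Finset.le_sup (f := G.dist r) (Finset.mem_univ w)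
  have hmod : (m + G.dist u r) % 2 = G.dist r w % 2 := by
    rw [dist_comm, ← ZMod.natCast_eq_natCast_iff', Nat.cast_add, ← eq_sub_iff_add_eq]
    exact hpar
  obtain ⟨a, ha⟩ : ∃ a, m = G.dist u r + 2 * tour.length + 2 * a + G.dist r w :=
    ⟨(m - (G.dist u r + 2 * tour.length + G.dist r w)) / 2, by omega⟩
  obtain ⟨pad, hpad⟩ := hrb.exists_walk_length_eq_two_mul a
  refine ⟨p₁.append ((tour.append tour.reverse).append (pad.append p₂)), ?_, fun x => ?_⟩
  · simp only [Walk.length_append, Walk.length_reverse, hp₁, hp₂, hpad, ha]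
    ring
  · simp [Walk.mem_support_append_iff, htour x]

end SimpleGraph

theorem exists_synchronized_closed_walks_general (k : ℕ)
    (W : Fin k → Type*) [∀ i, Fintype (W i)]
    (G : (i : Fin k) → SimpleGraph (W i))
    (hconn : ∀ i, (G i).Connected)
    (htwo : ∀ i, ∃ v w : W i, v ≠ w)
    (T : SimpleGraph (Fin k)) (hT : T.IsTree)
    (s : (i : Fin k) → (j : Fin k) → W i)
    (t : (i : Fin k) → (j : Fin k) → W j) :
    ∃ n : ℕ, 0 < n ∧ ∃ v : (i : Fin k) → ℕ → W i,
      (∀ i, v i n = v i 0) ∧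
      (∀ i, ∀ l < n, (G i).Adj (v i l) (v i (l + 1))) ∧
      (∀ i, ∀ w : W i, ∃ l < n, v i l = w) ∧
      (∀ i j : Fin k, i < j → T.Adj i j → ∃ l < n, v i l = s i j ∧ v j l = t i j) := by
  choose π D hsurj hwalks using fun i =>
    have : Nontrivial (W i) := ⟨htwo i⟩
    (hconn i).exists_hasCoveringWalks
  let tgt : (i j : Fin k) → W i := fun i j => if i < j then s i j else t j i
  obtain ⟨ψ, hψ⟩ := hT.exists_potential fun i j => π i (tgt i j)
  choose u hu using fun i => hsurj i (-ψ i)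
  let blk : Fin k → Fin k → ℕ := fun i j => Fintype.equivFin (Sym2 (Fin k)) s(i, j) + 1
  set N := Fintype.card (Sym2 (Fin k)) + 1
  set B := 2 * (∑ i, D i + 1)
  have hDB : ∀ i, D i < B := fun i => by
    have := Finset.single_le_sum (fun i _ => Nat.zero_le (D i)) (Finset.mem_univ i)
    omega
  have hblk : ∀ i, Function.Injective (blk i) := fun i j j' h =>
    Sym2.congr_right.mp ((Fintype.equivFin _).injective (Fin.val_injective (Nat.succ_injective h)))
  have hblkN : ∀ i j, 0 < blk i j ∧ blk i j < N := fun i j =>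
    ⟨Nat.succ_pos _, Nat.succ_lt_succ (Fin.is_lt _)⟩
  choose v hclosed hadj hcov hmeet using fun i =>
    ((hwalks i).const_add (ψ i)).exists_closed_walk_visiting_at (hDB i) (even_two_mul _)
      (Nat.succ_pos _) (blk i) (hblk i) (hblkN i) (tgt i)
      (u := u i) (by rw [hu, add_neg_cancel])
  refine ⟨B * N, by positivity, v, hclosed, hadj, hcov, fun i j hij hTij =>
    ⟨B * blk i j + (ψ i + π i (tgt i j)).val, (hmeet i j).1, ?_, ?_⟩⟩
  · simpa [tgt, hij] using (hmeet i j).2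
  · have hblk_comm : blk i j = blk j i := by simp [blk, Sym2.eq_swap]
    rw [hψ hTij, hblk_comm]
    simpa [tgt, hij.not_gt] using (hmeet j i).2

theorem exists_synchronized_closed_walks (k : ℕ) (hk : 1 ≤ k)
    (W : Fin k → Type*) [∀ i, Fintype (W i)]
    (G : (i : Fin k) → SimpleGraph (W i))
    (hconn : ∀ i, (G i).Connected)
    (htwo : ∀ i, ∃ v w : W i, v ≠ w)
    (T : SimpleGraph (Fin k)) (hT : T.IsTree)
    (s : (i : Fin k) → (j : Fin k) → W i)
    (t : (i : Fin k) → (j : Fin k) → W j) :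
    ∃ n : ℕ, 0 < n ∧ ∃ v : (i : Fin k) → ℕ → W i,
      (∀ i, v i n = v i 0) ∧
      (∀ i, ∀ l < n, (G i).Adj (v i l) (v i (l + 1))) ∧
      (∀ i, ∀ w : W i, ∃ l < n, v i l = w) ∧
      (∀ i j : Fin k, i < j → T.Adj i j → ∃ l < n, v i l = s i j ∧ v j l = t i j) :=
  exists_synchronized_closed_walks_general k W G hconn htwo T hT s t
end
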